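/- arXiv:1104.4728 — 5 statements merged into one kernel-verified Lean document; each statement's English description precedes it below -/
import Mathlib

section
/- Let V be a type, G : SimpleGraph V, and let T : SimpleGraph V be a spanning tree contained in G (T ≤ G and T is a tree), rooted at r ∈ V. Let ℓ : V → V → ℝ assign a length to each ordered pair (dart), and for each node v define dist(v) as the sum of ℓ over the consecutive ordered pairs of the unique r-to-v path in T, oriented from r towards v. Define the reduced length of an ordered pair (u,w) with respect to T as ℓ_T(u,w) = ℓ(u,w) + dist(u) − dist(w). Suppose d = (a,b) is an ordered pair with G.Adj a b that is a back-edge with respect to T, meaning b lies on the unique r-to-a path in T (b is an ancestor of a), and suppose d is unrelaxed: ℓ_T(a,b) < 0. Then the elementary cycle of d with respect to T — the unique b-to-a path in T (oriented from b to a) followed by the dart (a,b) — has negative length: (sum of ℓ over the darts of the b-to-a tree path) + ℓ(a,b) < 0. -/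
open Finset

/-- The length of a walk: the sum of the lengths `ℓ` of its darts. -/
def walkLength {V : Type*} {G : SimpleGraph V} (ℓ : V → V → ℝ) {s t : V}
    (W : G.Walk s t) : ℝ :=
  (W.darts.map (fun d => ℓ d.toProd.1 d.toProd.2)).sum

lemma walkLength_append {V : Type*} {G : SimpleGraph V} (ℓ : V → V → ℝ) {s t u : V}
    (p : G.Walk s t) (q : G.Walk t u) :
    walkLength ℓ (p.append q) = walkLength ℓ p + walkLength ℓ q := by
  simp [walkLength, SimpleGraph.Walk.darts_append]

/-- Let `T` be a spanning tree of `G` rooted at `r`, let `dist v` be the `ℓ`-length of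
the unique `r`-to-`v` path in `T`, and let `(a, b)` be a dart of `G` that is a back-edge
with respect to `T` (i.e. `b` lies on the `r`-to-`a` tree path) and is unrelaxed
(`ℓ a b + dist a - dist b < 0`). Then the elementary cycle of `(a, b)` with respect
to `T` — the `b`-to-`a` tree path followed by the dart `(a, b)` — has negative length. -/
theorem elementary_cycle_of_unrelaxed_back_edge_neg
    {V : Type*} (G T : SimpleGraph V) (hle : T ≤ G) (hT : T.IsTree)
    (r : V) (ℓ : V → V → ℝ) (dist : V → ℝ)
    (hdist : ∀ (v : V) (p : T.Walk r v), p.IsPath → dist v = walkLength ℓ p)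
    (a b : V) (hadj : G.Adj a b)
    (hback : ∃ p : T.Walk r a, p.IsPath ∧ b ∈ p.support)
    (hunrelaxed : ℓ a b + dist a - dist b < 0)
    (q : T.Walk b a) (hq : q.IsPath) :
    walkLength ℓ q + ℓ a b < 0 := by
  classical
  obtain ⟨p, hp, hb⟩ := hback
  have htake : (p.takeUntil b hb).IsPath := hp.takeUntil hb
  have hdrop : (p.dropUntil b hb).IsPath := hp.dropUntil hb
  have hqe : q = p.dropUntil b hb := by
    have := hT.IsAcyclic.path_unique ⟨q, hq⟩ ⟨p.dropUntil b hb, hdrop⟩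
    exact congrArg Subtype.val this
  have ha : dist a = walkLength ℓ p := hdist a p hp
  have hbdist : dist b = walkLength ℓ (p.takeUntil b hb) := hdist b _ htake
  have hsplit : walkLength ℓ p =
      walkLength ℓ (p.takeUntil b hb) + walkLength ℓ (p.dropUntil b hb) := by
    conv_lhs => rw [← p.take_spec hb]
    exact walkLength_append ℓ _ _
  have : walkLength ℓ q = dist a - dist b := by
    rw [hqe, ha, hbdist, hsplit]; ring
  linarith
end

section
/- Let V be a finite type, S ⊆ V, t ∉ S, and c : V → V → ℝ capacities. Let f be a feasible flow from S to t: f is antisymmetric, f u v ≤ c u v for all u, v, and inflow_f(v) = 0 for every v ∉ S ∪ {t}. Suppose there exist pairwise disjoint subsets X_1, …, X_k of V such that t ∉ X_i for each i, S ⊆ X_1 ∪ ⋯ ∪ X_k, and f saturates each cut: ∑_{u ∈ X_i, w ∉ X_i} f u w = ∑_{u ∈ X_i, w ∉ X_i} c u w for each i. Then f has maximum value: for every feasible flow f' from S to t, inflow_{f'}(t) ≤ inflow_f(t). -/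
open Finset

/-- If a feasible flow `f` from sources `S` to sink `t` exactly saturates each of a
family of pairwise disjoint cuts `(X i, V \ X i)`, none containing `t`, whose union
contains all the sources, then `f` has maximum value among all feasible flows. -/
theorem saturated_disjoint_cuts_imply_max_flow
    {V : Type*} [Fintype V] [DecidableEq V] (S : Finset V) (t : V) (ht : t ∉ S)
    (c : V → V → ℝ) (f : V → V → ℝ)
    (hanti : ∀ u v, f u v = -f v u)
    (hfeas : ∀ u v, f u v ≤ c u v)
    (hcons : ∀ v, v ∉ S ∪ {t} → ∑ u, f u v = 0)
    (k : ℕ) (X : Fin k → Finset V)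
    (hdisj : ∀ i j, i ≠ j → Disjoint (X i) (X j))
    (htX : ∀ i, t ∉ X i)
    (hSX : S ⊆ Finset.univ.biUnion X)
    (hsat : ∀ i, ∑ u ∈ X i, ∑ w ∈ (X i)ᶜ, f u w = ∑ u ∈ X i, ∑ w ∈ (X i)ᶜ, c u w)
    (f' : V → V → ℝ)
    (hanti' : ∀ u v, f' u v = -f' v u)
    (hfeas' : ∀ u v, f' u v ≤ c u v)
    (hcons' : ∀ v, v ∉ S ∪ {t} → ∑ u, f' u v = 0) :
    ∑ u, f' u t ≤ ∑ u, f u t := by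
  have key : ∀ g : V → V → ℝ, (∀ u v, g u v = -g v u) →
      (∀ v, v ∉ S ∪ {t} → ∑ u, g u v = 0) →
      ∑ u, g u t = ∑ i, ∑ u ∈ X i, ∑ w ∈ (X i)ᶜ, g u w := by
    intro g hg hc
    -- antisymmetric double sum over a square vanishes
    have hskew : ∀ A : Finset V, ∑ u ∈ A, ∑ w ∈ A, g u w = 0 := by
      intro A
      have h1 : ∑ u ∈ A, ∑ w ∈ A, g u w = ∑ u ∈ A, ∑ w ∈ A, g w u := Finset.sum_comm
      have h2 : ∑ u ∈ A, ∑ w ∈ A, g w u = -∑ u ∈ A, ∑ w ∈ A, g u w := by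
        rw [show (∑ u ∈ A, ∑ w ∈ A, g w u) = ∑ u ∈ A, ∑ w ∈ A, -g u w from
          Finset.sum_congr rfl fun u _ => Finset.sum_congr rfl fun w _ => hg w u]
        simp
      linarith
    -- net flow across a cut equals minus the total inflow inside
    have net : ∀ A : Finset V, ∑ u ∈ A, ∑ w ∈ (A)ᶜ, g u w = -∑ u ∈ A, ∑ w, g w u := by
      intro A
      have hsplit : ∑ u ∈ A, ∑ w, g u w
          = ∑ u ∈ A, ∑ w ∈ A, g u w + ∑ u ∈ A, ∑ w ∈ (A)ᶜ, g u w := by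
        rw [← Finset.sum_add_distrib]
        exact Finset.sum_congr rfl fun u _ => (Finset.sum_add_sum_compl A _).symm
      have hflip : ∑ u ∈ A, ∑ w, g u w = -∑ u ∈ A, ∑ w, g w u := by
        rw [show (∑ u ∈ A, ∑ w, g u w) = ∑ u ∈ A, ∑ w, -g w u from
          Finset.sum_congr rfl fun u _ => Finset.sum_congr rfl fun w _ => hg u w]
        simp
      have := hskew A
      linarith
    -- sum of cuts = - inflow over the union = - inflow over S
    have hY : ∑ i, ∑ u ∈ X i, ∑ w ∈ (X i)ᶜ, g u w
        = -∑ u ∈ Finset.univ.biUnion X, ∑ w, g w u := by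
      rw [Finset.sum_biUnion]
      · simp only [net]
        rw [← Finset.sum_neg_distrib]
      · intro i _ j _ hij
        exact hdisj i j hij
    have hYS : ∑ u ∈ Finset.univ.biUnion X, ∑ w, g w u = ∑ u ∈ S, ∑ w, g w u := by
      refine (Finset.sum_subset hSX fun x hx hxS => hc x ?_).symm
      simp only [Finset.mem_union, Finset.mem_singleton]
      rintro (h | rfl)
      · exact hxS h
      · obtain ⟨i, _, hi⟩ := Finset.mem_biUnion.mp hx
        exact htX i hi
    -- total inflow is zero
    have htotal : ∑ v, ∑ u, g u v = 0 := by
      rw [Finset.sum_comm]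
      exact hskew Finset.univ
    have hsplit2 : ∑ v, ∑ u, g u v
        = ∑ v ∈ S ∪ {t}, ∑ u, g u v + ∑ v ∈ (S ∪ {t})ᶜ, ∑ u, g u v :=
      (Finset.sum_add_sum_compl _ _).symm
    have hout : ∑ v ∈ (S ∪ {t})ᶜ, ∑ u, g u v = 0 := by
      refine Finset.sum_eq_zero fun v hv => hc v ?_
      simpa using hv
    have hunion : ∑ v ∈ S ∪ {t}, ∑ u, g u v = ∑ v ∈ S, ∑ u, g u v + ∑ u, g u t := by
      rw [Finset.sum_union (by simpa using ht)]
      simp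
    rw [hY, hYS]
    linarith
  rw [key f hanti hcons, key f' hanti' hcons']
  refine Finset.sum_le_sum fun i _ => ?_
  calc ∑ u ∈ X i, ∑ w ∈ (X i)ᶜ, f' u w
      ≤ ∑ u ∈ X i, ∑ w ∈ (X i)ᶜ, c u w :=
        Finset.sum_le_sum fun u _ => Finset.sum_le_sum fun w _ => hfeas' u w
    _ = ∑ u ∈ X i, ∑ w ∈ (X i)ᶜ, f u w := (hsat i).symm
end

section
/- Let V be a finite type, S ⊆ V, t ∉ S, and c : V → V → ℝ nonnegative capacities (c u v ≥ 0 for all u, v). Let f be a feasible preflow: f is antisymmetric, f u v ≤ c u v for all u, v, and inflow_f(v) ≥ 0 for every v ∉ S. Then there exists a feasible flow f' from S to t of the same value: f' is antisymmetric, f' u v ≤ c u v for all u, v, inflow_{f'}(v) = 0 for every v ∉ S ∪ {t}, and inflow_{f'}(t) = inflow_f(t). -/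
/-!
Among the feasible preflows with the value of `f` (a compact set) take one minimising the total
excess on the vertices outside `S ∪ {t}`. If some such vertex `v` still had positive excess, the
vertices from which `v` is reachable along edges of positive flow would contain a source `s`:
otherwise no flow enters that set from outside while its internal flow cancels, so its total
inflow could not be positive. Pushing a small amount of flow back along a walk from `s` to `v`
keeps the preflow feasible, changes the inflow only at `s` and `v`, and lowers the excess at `v`,
contradicting minimality.
-/

open Finset Filter Topology

section

variable {V : Type*}

theorem sum_sum_eq_zero_of_antisymm {g : V → V → ℝ} (hanti : ∀ u v, g u v = -g v u)
    (A : Finset V) : ∑ x ∈ A, ∑ u ∈ A, g u x = 0 := by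
  have h := calc ∑ x ∈ A, ∑ u ∈ A, g u x
      = ∑ u ∈ A, ∑ x ∈ A, -g x u := by rw [sum_comm]; simp only [← hanti]
    _ = -∑ x ∈ A, ∑ u ∈ A, g u x := by simp only [sum_neg_distrib]
  linarith

section EdgeFlow

variable [DecidableEq V]

def edgeFlow (a b : V) (u w : V) : ℝ :=
  (if u = a ∧ w = b then 1 else 0) - (if u = b ∧ w = a then 1 else 0)

theorem edgeFlow_antisymm (a b u w : V) : edgeFlow a b u w = -edgeFlow a b w u := by
  simp only [edgeFlow, and_comm (a := w = _)]
  ring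

theorem eq_of_edgeFlow_pos {a b u w : V} (h : 0 < edgeFlow a b u w) : u = a ∧ w = b := by
  by_contra hne
  simp only [edgeFlow, if_neg hne] at h
  split_ifs at h <;> linarith

theorem sum_edgeFlow [Fintype V] (a b x : V) :
    ∑ u, edgeFlow a b u x = (if x = b then 1 else 0) - (if x = a then 1 else 0) := by
  simp [edgeFlow, sum_sub_distrib, ite_and]

end EdgeFlow

variable [Fintype V]

theorem exists_unitFlow_of_reflTransGen [DecidableEq V] {R : V → V → Prop} {s v : V}
    (h : Relation.ReflTransGen R s v) :
    ∃ d : V → V → ℝ, (∀ u w, d u w = -d w u) ∧ (∀ u w, 0 < d u w → R u w) ∧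
      ∀ x, ∑ u, d u x = (if x = v then 1 else 0) - (if x = s then 1 else 0) := by
  induction h with
  | refl => exact ⟨0, fun _ _ => by simp, fun _ _ h => absurd h (lt_irrefl 0), fun _ => by simp⟩
  | @tail b w _ hbw ih =>
    obtain ⟨d, hanti, hpos, hsum⟩ := ih
    refine ⟨fun u x => d u x + edgeFlow b w u x, fun u x => ?_, fun u x h => ?_, fun x => ?_⟩
    · show d u x + _ = -(d x u + _)
      rw [hanti u x, edgeFlow_antisymm]; ring
    · rcases lt_or_ge 0 (d u x) with hd | hd
      · exact hpos u x hd
      · obtain ⟨rfl, rfl⟩ := eq_of_edgeFlow_pos (a := b) (b := w) (by linarith)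
        exact hbw
    · rw [sum_add_distrib, hsum, sum_edgeFlow]; ring

theorem exists_mem_reflTransGen_of_inflow_pos {g : V → V → ℝ} (hanti : ∀ u v, g u v = -g v u)
    {S : Finset V} (hpre : ∀ x ∉ S, 0 ≤ ∑ u, g u x) {v : V} (hv : 0 < ∑ u, g u v) :
    ∃ s ∈ S, Relation.ReflTransGen (fun a b => 0 < g a b) s v := by
  classical
  by_contra! hS
  set A := univ.filter fun x => Relation.ReflTransGen (fun a b => 0 < g a b) x v
  have hvA : v ∈ A := mem_filter.2 ⟨mem_univ _, .refl⟩
  have hAS : ∀ x ∈ A, x ∉ S := fun x hx hxS => hS x hxS (mem_filter.1 hx).2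
  have hinflow_pos : 0 < ∑ x ∈ A, ∑ u, g u x :=
    sum_pos' (fun x hx => hpre x (hAS x hx)) ⟨v, hvA, hv⟩
  have hcross : ∑ x ∈ A, ∑ u ∈ Aᶜ, g u x ≤ 0 := by
    refine sum_nonpos fun x hx => sum_nonpos fun u hu => not_lt.1 fun hux => ?_
    exact mem_compl.1 hu (mem_filter.2 ⟨mem_univ _, .head hux (mem_filter.1 hx).2⟩)
  have hsplit : ∑ x ∈ A, ∑ u, g u x = ∑ x ∈ A, ∑ u ∈ A, g u x + ∑ x ∈ A, ∑ u ∈ Aᶜ, g u x := by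
    simp only [← sum_add_distrib, sum_add_sum_compl]
  rw [hsplit, sum_sum_eq_zero_of_antisymm hanti] at hinflow_pos
  linarith

theorem eventually_sub_mul_le {c g d : V → V → ℝ} (hc : ∀ u w, 0 ≤ c u w)
    (hgc : ∀ u w, g u w ≤ c u w) (hganti : ∀ u w, g u w = -g w u)
    (hdanti : ∀ u w, d u w = -d w u) (hdg : ∀ u w, 0 < d u w → 0 < g u w) :
    ∀ᶠ ε in 𝓝[>] 0, ∀ u w, g u w - ε * d u w ≤ c u w := by
  have hsmall : ∀ᶠ ε in 𝓝 (0 : ℝ), ∀ u w, 0 < g u w → ε * d u w < g u w := by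
    refine eventually_all.2 fun u => eventually_all.2 fun w => ?_
    have hcont : Tendsto (fun ε : ℝ => ε * d u w) (𝓝 0) (𝓝 0) := by
      simpa using (tendsto_id (x := 𝓝 (0 : ℝ))).mul_const (d u w)
    by_cases hg : 0 < g u w
    · exact (hcont.eventually (gt_mem_nhds hg)).mono fun _ h _ => h
    · exact .of_forall fun _ h => absurd h hg
  filter_upwards [self_mem_nhdsWithin, nhdsWithin_le_nhds hsmall] with ε (hε : 0 < ε) hε_small u w
  rcases le_or_gt 0 (d u w) with hd | hd
  · nlinarith [hgc u w]
  · -- then `g w u > 0`, and `g w u - ε * d w u` stays positive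
    have := hε_small w u (hdg w u (by linarith [hdanti u w]))
    rw [hganti u w, hdanti u w]
    linarith [hc u w]

def IsFeasiblePreflow (c : V → V → ℝ) (S : Finset V) (f : V → V → ℝ) : Prop :=
  (∀ u v, f u v = -f v u) ∧ (∀ u v, f u v ≤ c u v) ∧ ∀ v ∉ S, 0 ≤ ∑ u, f u v

theorem isCompact_setOf_isFeasiblePreflow (c : V → V → ℝ) (S : Finset V) :
    IsCompact {f | IsFeasiblePreflow c S f} := by
  have hclosed : IsClosed {f | IsFeasiblePreflow c S f} := by
    simp only [IsFeasiblePreflow, Set.ofPred_and, Set.ofPred_forall]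
    refine .inter (isClosed_iInter fun u => isClosed_iInter fun v => ?_)
      (.inter (isClosed_iInter fun u => isClosed_iInter fun v => ?_)
        (isClosed_iInter fun v => isClosed_iInter fun _ => ?_))
    · exact isClosed_eq (by fun_prop) (by fun_prop)
    · exact isClosed_le (by fun_prop) continuous_const
    · exact isClosed_le continuous_const (by fun_prop)
  refine (isCompact_univ_pi fun u => isCompact_univ_pi fun v =>
    isCompact_Icc (a := -c v u) (b := c u v)).of_isClosed_subset hclosed fun f hf => ?_
  simp only [Set.mem_univ_pi]
  exact fun u v => ⟨by linarith [hf.1 u v, hf.2.1 v u], hf.2.1 u v⟩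

theorem exists_isFeasiblePreflow_inflow_lt [DecidableEq V] {c g : V → V → ℝ} {S : Finset V}
    (hc : ∀ u w, 0 ≤ c u w) (hg : IsFeasiblePreflow c S g) {v : V} (hvS : v ∉ S)
    (hv : 0 < ∑ u, g u v) :
    ∃ s ∈ S, ∃ g', IsFeasiblePreflow c S g' ∧
      (∀ x, x ≠ s → x ≠ v → ∑ u, g' u x = ∑ u, g u x) ∧ ∑ u, g' u v < ∑ u, g u v := by
  obtain ⟨hanti, hgc, hpre⟩ := hg
  obtain ⟨s, hs, hsv⟩ := exists_mem_reflTransGen_of_inflow_pos hanti hpre hv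
  obtain ⟨d, hdanti, hdg, hd⟩ := exists_unitFlow_of_reflTransGen hsv
  obtain ⟨ε, hεc, hε, hεv⟩ :=
    ((eventually_sub_mul_le hc hgc hanti hdanti hdg).and (Ioo_mem_nhdsGT hv)).exists
  have hinflow (x : V) : ∑ u, (g u x - ε * d u x) =
      ∑ u, g u x - ε * ((if x = v then 1 else 0) - (if x = s then 1 else 0)) := by
    rw [sum_sub_distrib, ← mul_sum, hd]
  have hsv : v ≠ s := ne_of_mem_of_not_mem hs hvS |>.symm
  refine ⟨s, hs, fun u x => g u x - ε * d u x,
    ⟨fun u x => ?_, hεc, fun x hx => ?_⟩, fun x hxs hxv => ?_, ?_⟩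
  · show _ - _ = -(_ - _)
    rw [hanti u x, hdanti u x]; ring
  · rw [hinflow]
    by_cases hxv : x = v
    · subst hxv; simp only [if_pos, if_neg hsv]; linarith
    · simp [hxv, ne_of_mem_of_not_mem hs hx |>.symm, hpre x hx]
  · simp [hinflow, hxs, hxv]
  · simp [hinflow, hsv, hε]

end

/-- Any feasible preflow (with respect to nonnegative capacities `c`, sources `S`
and sink `t`) can be converted into a feasible flow of the same value. -/
theorem feasible_preflow_to_feasible_flow
    {V : Type*} [Fintype V] [DecidableEq V] (S : Finset V) (t : V) (ht : t ∉ S)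
    (c : V → V → ℝ) (hc : ∀ u v, 0 ≤ c u v)
    (f : V → V → ℝ)
    (hanti : ∀ u v, f u v = -f v u)
    (hfeas : ∀ u v, f u v ≤ c u v)
    (hpre : ∀ v, v ∉ S → 0 ≤ ∑ u, f u v) :
    ∃ f' : V → V → ℝ,
      (∀ u v, f' u v = -f' v u) ∧
      (∀ u v, f' u v ≤ c u v) ∧
      (∀ v, v ∉ S ∪ {t} → ∑ u, f' u v = 0) ∧
      ∑ u, f' u t = ∑ u, f u t := by
  set K := {g | IsFeasiblePreflow c S g ∧ ∑ u, g u t = ∑ u, f u t}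
  have hK : IsCompact K :=
    (isCompact_setOf_isFeasiblePreflow c S).inter_right (isClosed_eq (by fun_prop) continuous_const)
  obtain ⟨g, ⟨hg, hgt⟩, hmin⟩ := hK.exists_isMinOn ⟨f, ⟨hanti, hfeas, hpre⟩, rfl⟩
    (f := fun g => ∑ x ∈ (S ∪ {t})ᶜ, ∑ u, g u x) (by fun_prop : Continuous _).continuousOn
  refine ⟨g, hg.1, hg.2.1, fun v hv => ?_, hgt⟩
  have hvS : v ∉ S := fun h => hv (mem_union_left _ h)
  have hvt : v ≠ t := fun h => hv (mem_union_right _ (mem_singleton.2 h))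
  by_contra hne
  obtain ⟨s, hs, g', hg', hsame, hlt⟩ :=
    exists_isFeasiblePreflow_inflow_lt hc hg hvS ((hg.2.2 v hvS).lt_of_ne' hne)
  have hg'K : g' ∈ K := ⟨hg', (hsame t (ne_of_mem_of_not_mem hs ht).symm hvt.symm).trans hgt⟩
  refine (hmin hg'K).not_gt <| sum_lt_sum (f := fun x => ∑ u, g' u x) (fun x hx => ?_)
    ⟨v, mem_compl.2 hv, hlt⟩
  rcases eq_or_ne x v with rfl | hxv
  · exact hlt.le
  · refine (hsame x ?_ hxv).le
    rintro rfl
    exact mem_compl.1 hx (mem_union_left _ hs)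
end

section
/- Let V be a finite type, c : V → V → ℝ capacities, and f : V → V → ℝ an antisymmetric flow assignment. Suppose some cut is over-saturated by f, i.e., there exists X ⊆ V with ∑_{u ∈ X, v ∉ X} (c u v − f u v) < 0. Then f is not quasi-feasible: there is no circulation φ (antisymmetric with zero inflow at every node) such that f + φ is feasible (f u v + φ u v ≤ c u v for all u, v). -/
open Finset

/-- If some cut is over-saturated by an antisymmetric flow assignment `f` (its residual
capacity is negative), then `f` is not quasi-feasible: no circulation `φ` makes `f + φ`
respect the capacities `c`. -/
theorem oversaturated_cut_implies_not_quasi_feasible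
    {V : Type*} [Fintype V] [DecidableEq V] (c : V → V → ℝ) (f : V → V → ℝ)
    (hanti : ∀ u v, f u v = -f v u)
    (X : Finset V)
    (hover : ∑ u ∈ X, ∑ v ∈ Xᶜ, (c u v - f u v) < 0) :
    ¬ ∃ φ : V → V → ℝ,
        (∀ u v, φ u v = -φ v u) ∧
        (∀ v, ∑ u, φ u v = 0) ∧
        (∀ u v, f u v + φ u v ≤ c u v) := by
  rintro ⟨φ, hφa, hφ0, hle⟩
  -- each row sums to zero
  have hrow : ∀ u, ∑ v, φ u v = 0 := by
    intro u
    have : ∑ v, φ u v = -∑ v, φ v u := by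
      rw [← Finset.sum_neg_distrib]
      exact Finset.sum_congr rfl fun v _ => hφa u v
    rw [this, hφ0 u, neg_zero]
  -- the inner part sums to zero
  have hin : ∑ u ∈ X, ∑ v ∈ X, φ u v = 0 := by
    have h1 : ∑ u ∈ X, ∑ v ∈ X, φ u v = ∑ u ∈ X, ∑ v ∈ X, φ v u := Finset.sum_comm
    have h2 : ∑ u ∈ X, ∑ v ∈ X, φ v u = -∑ u ∈ X, ∑ v ∈ X, φ u v := by
      rw [← Finset.sum_neg_distrib]
      refine Finset.sum_congr rfl fun u _ => ?_
      rw [← Finset.sum_neg_distrib]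
      exact Finset.sum_congr rfl fun v _ => (hφa v u)
    linarith [h1, h2]
  -- cross cut sums to zero
  have hcross : ∑ u ∈ X, ∑ v ∈ Xᶜ, φ u v = 0 := by
    have : ∑ u ∈ X, (∑ v ∈ X, φ u v + ∑ v ∈ Xᶜ, φ u v) = 0 := by
      refine Finset.sum_eq_zero fun u _ => ?_
      rw [Finset.sum_add_sum_compl]
      exact hrow u
    rw [Finset.sum_add_distrib, hin, zero_add] at this
    exact this
  have hbound : (0:ℝ) ≤ ∑ u ∈ X, ∑ v ∈ Xᶜ, (c u v - f u v) := by
    rw [← hcross]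
    refine Finset.sum_le_sum fun u _ => Finset.sum_le_sum fun v _ => ?_
    linarith [hle u v]
  linarith
end

section
/- Let V be a finite type, S ⊆ V, t ∉ S, and c : V → V → ℝ nonnegative capacities (c u v ≥ 0 for all u, v). Let f be an antisymmetric flow assignment such that inflow_f(v) = 0 for every v ∉ S ∪ {t} and the outflow at every source is nonnegative (inflow_f(s) ≤ 0 for every s ∈ S). Then no cut containing the sink is over-saturated: for every X ⊆ V with t ∈ X, ∑_{u ∈ X, v ∉ X} f u v ≤ 0 ≤ ∑_{u ∈ X, v ∉ X} c u v, and hence the residual capacity ∑_{u ∈ X, v ∉ X} (c u v − f u v) is nonnegative. -/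
open Finset

/-- For a flow `f` from sources `S` to sink `t` whose outflow at every source is
nonnegative, and nonnegative capacities `c`, no cut containing the sink is
over-saturated: for `X` with `t ∈ X`, the net flow across `(X, V \ X)` is nonpositive,
the capacity of the cut is nonnegative, and hence the residual capacity of the cut is
nonnegative. -/
theorem no_oversaturated_cut_containing_sink
    {V : Type*} [Fintype V] [DecidableEq V] (S : Finset V) (t : V) (ht : t ∉ S)
    (c : V → V → ℝ) (hc : ∀ u v, 0 ≤ c u v)
    (f : V → V → ℝ)
    (hanti : ∀ u v, f u v = -f v u)
    (hcons : ∀ v, v ∉ S ∪ {t} → ∑ u, f u v = 0)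
    (hsrc : ∀ s ∈ S, ∑ u, f u s ≤ 0)
    (X : Finset V) (htX : t ∈ X) :
    ∑ u ∈ X, ∑ v ∈ Xᶜ, f u v ≤ 0 ∧
    0 ≤ ∑ u ∈ X, ∑ v ∈ Xᶜ, c u v ∧
    0 ≤ ∑ u ∈ X, ∑ v ∈ Xᶜ, (c u v - f u v) := by
  have h0 : ∀ (A : Finset V), ∑ u ∈ A, ∑ v ∈ A, f u v = 0 := by
    intro A
    have h1 : ∑ u ∈ A, ∑ v ∈ A, f u v = -∑ u ∈ A, ∑ v ∈ A, f u v := by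
      calc ∑ u ∈ A, ∑ v ∈ A, f u v = ∑ u ∈ A, ∑ v ∈ A, -f v u := by
            exact Finset.sum_congr rfl fun u _ => Finset.sum_congr rfl fun v _ => hanti u v
        _ = -∑ u ∈ A, ∑ v ∈ A, f v u := by simp [Finset.sum_neg_distrib]
        _ = -∑ u ∈ A, ∑ v ∈ A, f u v := by rw [Finset.sum_comm]
    linarith
  have key : ∑ u ∈ X, ∑ v ∈ Xᶜ, f u v = ∑ v ∈ Xᶜ, ∑ u, f u v := by
    rw [Finset.sum_comm]
    have h2 : ∑ v ∈ Xᶜ, ∑ u, f u v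
        = ∑ v ∈ Xᶜ, ∑ u ∈ X, f u v + ∑ v ∈ Xᶜ, ∑ u ∈ Xᶜ, f u v := by
      rw [← Finset.sum_add_distrib]
      exact Finset.sum_congr rfl fun v _ => (Finset.sum_add_sum_compl X _).symm
    have h3 : ∑ v ∈ Xᶜ, ∑ u ∈ Xᶜ, f u v = 0 := by rw [Finset.sum_comm]; exact h0 Xᶜ
    linarith
  have hflow : ∑ u ∈ X, ∑ v ∈ Xᶜ, f u v ≤ 0 := by
    rw [key]
    apply Finset.sum_nonpos
    intro v hv
    have hvt : v ≠ t := by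
      intro h; rw [h] at hv; exact (Finset.mem_compl.mp hv) htX
    by_cases hvS : v ∈ S
    · exact hsrc v hvS
    · have : v ∉ S ∪ {t} := by simp [hvS, hvt]
      exact le_of_eq (hcons v this)
  have hcap : 0 ≤ ∑ u ∈ X, ∑ v ∈ Xᶜ, c u v :=
    Finset.sum_nonneg fun u _ => Finset.sum_nonneg fun v _ => hc u v
  refine ⟨hflow, hcap, ?_⟩
  have : ∑ u ∈ X, ∑ v ∈ Xᶜ, (c u v - f u v)
      = ∑ u ∈ X, ∑ v ∈ Xᶜ, c u v - ∑ u ∈ X, ∑ v ∈ Xᶜ, f u v := by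
    simp [Finset.sum_sub_distrib]
  linarith [this]
end
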